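/- arXiv:1603.05515 — 9 statements merged into one kernel-verified Lean document; each statement's English description precedes it below -/
import Mathlib

section
/- Let K_n (n even) be the complex pentadiagonal 2-Toeplitz matrix whose diagonal alternates a_1, a_2, whose second superdiagonal alternates b_1, b_2, and whose second subdiagonal alternates c_1, c_2 (all other entries zero). If α ∈ ℂ satisfies A_{n+1}(α)=0 or B_n(α)=0 (where {A_i}, {B_i} are the associated polynomial sequences), then α is an eigenvalue of K_n. -/
open Polynomial Matrix

noncomputable def pentaK (n : ℕ) (a1 a2 b1 b2 c1 c2 : ℂ) : Matrix (Fin n) (Fin n) ℂ :=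
  Matrix.of fun i j =>
    if i.val = j.val then (if i.val % 2 = 0 then a1 else a2)
    else if j.val = i.val + 2 then (if i.val % 2 = 0 then b1 else b2)
    else if i.val = j.val + 2 then (if j.val % 2 = 0 then c1 else c2)
    else 0

/-!
The recurrences for `A` and `B` say that the infinite pentadiagonal 2-Toeplitz matrix maps the
sequence `(P_j(α))_j` to `α • (P_j(α))_j`, for `P = A` and `P = B`. Its leading `n × n` block `K_n`
therefore has `(P_0(α), …, P_{n-1}(α))` as an eigenvector for `α`, as soon as the two entries
`P_n(α), P_{n+1}(α)` that the truncation cuts off vanish and the vector is nonzero. Since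
`b_1, b_2 ≠ 0`, the recurrence propagates `A_0 = 0` to `A_{2k} = 0` and `B_1 = 0` to
`B_{2k+1} = 0`; so for `n` even, `A_{n+1}(α) = 0` or `B_n(α) = 0` is exactly what is missing,
and `A_1 = 1`, `B_0 = 1` make the vectors nonzero.
-/

namespace Pentadiagonal

variable {R : Type*} [CommRing R]

def alternating {β : Type*} (x y : β) (i : ℕ) : β := if i % 2 = 0 then x else y

section Alternating

variable {β : Type*} (x y : β)

@[simp] lemma alternating_zero : alternating x y 0 = x := rfl

@[simp] lemma alternating_one : alternating x y 1 = y := rfl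

lemma alternating_of_even {i : ℕ} (hi : Even i) : alternating x y i = x :=
  if_pos (Nat.even_iff.mp hi)

lemma alternating_of_odd {i : ℕ} (hi : Odd i) : alternating x y i = y :=
  if_neg (by rw [Nat.odd_iff.mp hi]; decide)

@[simp] lemma alternating_add_two (i : ℕ) : alternating x y (i + 2) = alternating x y i := by
  simp [alternating]

lemma alternating_ne {z : β} (hx : x ≠ z) (hy : y ≠ z) (i : ℕ) : alternating x y i ≠ z := by
  unfold alternating; split_ifs <;> assumption

end Alternating

variable (a b c : ℕ → R)

def entry (i j : ℕ) : R :=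
  if i = j then a i else if j = i + 2 then b i else if i = j + 2 then c j else 0

def matrix (n : ℕ) : Matrix (Fin n) (Fin n) R := of fun i j => entry a b c i j

/-- The infinite matrix `entry a b c` acting on sequences; `matrix a b c n` is its leading block. -/
def applySeq (w : ℕ → R) : ℕ → R
  | 0 => a 0 * w 0 + b 0 * w 2
  | 1 => a 1 * w 1 + b 1 * w 3
  | j + 2 => c j * w j + a (j + 2) * w (j + 2) + b (j + 2) * w (j + 4)

lemma pentaK_eq (n : ℕ) (a1 a2 b1 b2 c1 c2 : ℂ) :
    pentaK n a1 a2 b1 b2 c1 c2 =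
      matrix (alternating a1 a2) (alternating b1 b2) (alternating c1 c2) n :=
  rfl

lemma entry_mul (w : ℕ → R) (m k : ℕ) :
    entry a b c m k * w k =
      (if k = m then a m * w m else 0) + (if k = m + 2 then b m * w (m + 2) else 0) +
        (if k + 2 = m then c k * w k else 0) := by
  unfold entry
  split_ifs <;> first | omega | (subst_vars; ring)

lemma sum_range_entry_mul (w : ℕ → R) {m N : ℕ} (hN : m + 2 < N) :
    ∑ k ∈ Finset.range N, entry a b c m k * w k = applySeq a b c w m := by
  simp only [entry_mul, Finset.sum_add_distrib, Finset.sum_ite_eq', Finset.mem_range,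
    if_pos hN, if_pos (show m < N by omega)]
  match m with
  | 0 => simp [applySeq]
  | 1 => simp [applySeq]
  | j + 2 =>
    simp only [add_left_inj, Finset.sum_ite_eq', Finset.mem_range, if_pos (show j < N by omega),
      applySeq]
    ring

variable {a b c}

lemma matrix_mulVec_apply {n : ℕ} {w : ℕ → R} (hn : w n = 0) (hn1 : w (n + 1) = 0)
    (m : Fin n) : (matrix a b c n *ᵥ fun i => w i) m = applySeq a b c w m := by
  -- truncating to `n` columns only drops the terms at `w n` and `w (n + 1)`
  have hsum : ∑ k : Fin n, entry a b c m k * w k =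
      ∑ k ∈ Finset.range (n + 2), entry a b c m k * w k := by
    simp [Finset.sum_range_succ, Fin.sum_univ_eq_sum_range (fun k => entry a b c m k * w k), hn,
      hn1]
  rw [← sum_range_entry_mul a b c w (by omega : m.val + 2 < n + 2), ← hsum]
  rfl

theorem hasEigenvalue_toLin'_matrix {n : ℕ} {α : R} {w : ℕ → R}
    (hrow : ∀ m < n, applySeq a b c w m = α * w m) (hn : w n = 0) (hn1 : w (n + 1) = 0)
    (hw : ∃ m < n, w m ≠ 0) :
    Module.End.HasEigenvalue (toLin' (matrix a b c n)) α := by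
  obtain ⟨m, hm, hwm⟩ := hw
  refine Module.End.hasEigenvalue_of_hasEigenvector (x := fun i : Fin n => w i) ⟨?_, ?_⟩
  · refine Module.End.mem_eigenspace_iff.mpr (funext fun i => ?_)
    simp [toLin'_apply, matrix_mulVec_apply hn hn1, hrow i i.isLt]
  · exact fun h => hwm (congrFun h ⟨m, hm⟩)

lemma eq_zero_of_applySeq_eq_mul [NoZeroDivisors R] {x : R} {w : ℕ → R} (hb : ∀ i, b i ≠ 0)
    (hrow : ∀ m, applySeq a b c w m = x * w m) {r : ℕ} (hr : r < 2) (hwr : w r = 0) (k : ℕ) :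
    w (r + 2 * k) = 0 := by
  have hstep : ∀ j, w j = 0 → w (j + 2) = 0 → w (j + 4) = 0 := fun j hj hj2 => by
    have h := hrow (j + 2)
    simp only [applySeq, hj, hj2] at h
    exact (mul_eq_zero.mp (by linear_combination h)).resolve_left (hb _)
  have hbase : w (r + 2) = 0 := by
    have h := hrow r
    interval_cases r <;> simp only [applySeq, hwr] at h <;>
      exact (mul_eq_zero.mp (by linear_combination h)).resolve_left (hb _)
  have hpair : ∀ k, w (r + 2 * k) = 0 ∧ w (r + 2 * k + 2) = 0 := by
    intro k
    induction k with
    | zero => exact ⟨hwr, hbase⟩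
    | succ k ih => exact ⟨ih.2, hstep _ ih.1 ih.2⟩
  exact (hpair k).1

lemma eval_applySeq (α : R) (P : ℕ → R[X]) (m : ℕ) :
    (applySeq (C ∘ a) (C ∘ b) (C ∘ c) P m).eval α =
      applySeq a b c (fun j => (P j).eval α) m := by
  match m with
  | 0 | 1 | _ + 2 => simp [applySeq]

theorem hasEigenvalue_toLin'_matrix_of_eval {n : ℕ} {α : R} {P : ℕ → R[X]}
    (hP : ∀ m, applySeq (C ∘ a) (C ∘ b) (C ∘ c) P m = X * P m)
    (hn : (P n).eval α = 0) (hn1 : (P (n + 1)).eval α = 0) (hw : ∃ m < n, (P m).eval α ≠ 0) :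
    Module.End.HasEigenvalue (toLin' (matrix a b c n)) α :=
  hasEigenvalue_toLin'_matrix (fun m _ => by rw [← eval_applySeq, hP, eval_mul, eval_X]) hn hn1 hw

lemma applySeq_C_alternating {a1 a2 b1 b2 c1 c2 : R} {P : ℕ → R[X]}
    (h0 : X * P 0 = C a1 * P 0 + C b1 * P 2) (h1 : X * P 1 = C a2 * P 1 + C b2 * P 3)
    (hodd : ∀ i, 3 ≤ i → Odd i →
      X * P (i - 1) = C c1 * P (i - 3) + C a1 * P (i - 1) + C b1 * P (i + 1))
    (heven : ∀ i, 3 ≤ i → Even i →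
      X * P (i - 1) = C c2 * P (i - 3) + C a2 * P (i - 1) + C b2 * P (i + 1))
    (m : ℕ) :
    applySeq (C ∘ alternating a1 a2) (C ∘ alternating b1 b2) (C ∘ alternating c1 c2) P m =
      X * P m := by
  match m with
  | 0 => simp [applySeq, h0]
  | 1 => simp [applySeq, h1]
  | j + 2 =>
    rcases Nat.even_or_odd j with hj | hj
    · have h := hodd (j + 3) (by omega) (hj.add_odd (by decide))
      simp only [Nat.reduceSubDiff, Nat.add_sub_cancel] at h
      simp [applySeq, alternating_of_even _ _ hj, h]
    · have h := heven (j + 3) (by omega) (hj.add_odd (by decide))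
      simp only [Nat.reduceSubDiff, Nat.add_sub_cancel] at h
      simp [applySeq, alternating_of_odd _ _ hj, h]

end Pentadiagonal

open Pentadiagonal

theorem stmt5_general (a1 a2 b1 b2 c1 c2 : ℂ) (hb1 : b1 ≠ 0) (hb2 : b2 ≠ 0)
    (t : ℕ) (ht : 1 ≤ t) (n : ℕ) (hn : n = 2 * t)
    (A B : ℕ → Polynomial ℂ)
    (A0 : A 0 = 0) (A1 : A 1 = 1)
    (hAr0 : Polynomial.X * A 0 = Polynomial.C a1 * A 0 + Polynomial.C b1 * A 2)
    (hAr1 : Polynomial.X * A 1 = Polynomial.C a2 * A 1 + Polynomial.C b2 * A 3)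
    (hAodd : ∀ i, 3 ≤ i → Odd i →
      Polynomial.X * A (i - 1) =
        Polynomial.C c1 * A (i - 3) + Polynomial.C a1 * A (i - 1) + Polynomial.C b1 * A (i + 1))
    (hAeven : ∀ i, 3 ≤ i → Even i →
      Polynomial.X * A (i - 1) =
        Polynomial.C c2 * A (i - 3) + Polynomial.C a2 * A (i - 1) + Polynomial.C b2 * A (i + 1))
    (B0 : B 0 = 1) (B1 : B 1 = 0)
    (hBr0 : Polynomial.X * B 0 = Polynomial.C a1 * B 0 + Polynomial.C b1 * B 2)
    (hBr1 : Polynomial.X * B 1 = Polynomial.C a2 * B 1 + Polynomial.C b2 * B 3)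
    (hBodd : ∀ i, 3 ≤ i → Odd i →
      Polynomial.X * B (i - 1) =
        Polynomial.C c1 * B (i - 3) + Polynomial.C a1 * B (i - 1) + Polynomial.C b1 * B (i + 1))
    (hBeven : ∀ i, 3 ≤ i → Even i →
      Polynomial.X * B (i - 1) =
        Polynomial.C c2 * B (i - 3) + Polynomial.C a2 * B (i - 1) + Polynomial.C b2 * B (i + 1))
    (α : ℂ) (hα : (A (n + 1)).eval α = 0 ∨ (B n).eval α = 0) :
    Module.End.HasEigenvalue
      (Matrix.toLin' (pentaK n a1 a2 b1 b2 c1 c2)) α := by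
  have hArec := applySeq_C_alternating hAr0 hAr1 hAodd hAeven
  have hBrec := applySeq_C_alternating hBr0 hBr1 hBodd hBeven
  have hb : ∀ i, (C ∘ alternating b1 b2) i ≠ 0 :=
    fun i => C_ne_zero.mpr (alternating_ne b1 b2 hb1 hb2 i)
  rw [pentaK_eq]
  subst hn
  rcases hα with hA | hB
  · have hAn : A (2 * t) = 0 := by
      simpa using eq_zero_of_applySeq_eq_mul hb hArec (r := 0) (by norm_num) A0 t
    exact hasEigenvalue_toLin'_matrix_of_eval hArec (by simp [hAn]) hA ⟨1, by omega, by simp [A1]⟩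
  · have hBn1 : B (2 * t + 1) = 0 := by
      simpa [add_comm] using eq_zero_of_applySeq_eq_mul hb hBrec (r := 1) (by norm_num) B1 t
    exact hasEigenvalue_toLin'_matrix_of_eval hBrec hB (by simp [hBn1]) ⟨0, by omega, by simp [B0]⟩

theorem stmt5 (a1 a2 b1 b2 c1 c2 : ℂ) (hb1 : b1 ≠ 0) (hb2 : b2 ≠ 0) (hc1 : c1 ≠ 0) (hc2 : c2 ≠ 0)
    (t : ℕ) (ht : 1 ≤ t) (n : ℕ) (hn : n = 2 * t)
    (A B : ℕ → Polynomial ℂ)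
    (A0 : A 0 = 0) (A1 : A 1 = 1)
    (hAr0 : Polynomial.X * A 0 = Polynomial.C a1 * A 0 + Polynomial.C b1 * A 2)
    (hAr1 : Polynomial.X * A 1 = Polynomial.C a2 * A 1 + Polynomial.C b2 * A 3)
    (hAodd : ∀ i, 3 ≤ i → Odd i →
      Polynomial.X * A (i - 1) =
        Polynomial.C c1 * A (i - 3) + Polynomial.C a1 * A (i - 1) + Polynomial.C b1 * A (i + 1))
    (hAeven : ∀ i, 3 ≤ i → Even i →
      Polynomial.X * A (i - 1) =
        Polynomial.C c2 * A (i - 3) + Polynomial.C a2 * A (i - 1) + Polynomial.C b2 * A (i + 1))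
    (B0 : B 0 = 1) (B1 : B 1 = 0)
    (hBr0 : Polynomial.X * B 0 = Polynomial.C a1 * B 0 + Polynomial.C b1 * B 2)
    (hBr1 : Polynomial.X * B 1 = Polynomial.C a2 * B 1 + Polynomial.C b2 * B 3)
    (hBodd : ∀ i, 3 ≤ i → Odd i →
      Polynomial.X * B (i - 1) =
        Polynomial.C c1 * B (i - 3) + Polynomial.C a1 * B (i - 1) + Polynomial.C b1 * B (i + 1))
    (hBeven : ∀ i, 3 ≤ i → Even i →
      Polynomial.X * B (i - 1) =
        Polynomial.C c2 * B (i - 3) + Polynomial.C a2 * B (i - 1) + Polynomial.C b2 * B (i + 1))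
    (α : ℂ) (hα : (A (n + 1)).eval α = 0 ∨ (B n).eval α = 0) :
    Module.End.HasEigenvalue
      (Matrix.toLin' (pentaK n a1 a2 b1 b2 c1 c2)) α :=
  stmt5_general a1 a2 b1 b2 c1 c2 hb1 hb2 t ht n hn A B A0 A1 hAr0 hAr1 hAodd hAeven B0 B1 hBr0 hBr1
    hBodd hBeven α hα
end

section
/- For n even, the characteristic polynomial of the pentadiagonal 2-Toeplitz matrix K_n factors as det(x·I_n − K_n) = (b_1·b_2)^{n/2} · A_{n+1}(x) · B_n(x), where {A_i} and {B_i} are the associated polynomial sequences. -/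
open Polynomial Matrix

/-!
Listing the even-indexed coordinates before the odd-indexed ones turns `K_n` into the block
diagonal matrix of two tridiagonal Toeplitz matrices, with entries `(a₁, b₁, c₁)` and
`(a₂, b₂, c₂)`. The characteristic polynomial `P_k` of a `k × k` tridiagonal Toeplitz matrix
satisfies `P_{k+2} = (X - a) P_{k+1} - b c P_k`, so `P_k = b^k u_k` for any sequence with
`u_0 = 1` and `X u_{k+1} = c u_k + a u_{k+1} + b u_{k+2}`; the even-indexed `B_{2k}` and the
odd-indexed `A_{2k+1}` are such sequences for the two blocks.
-/

def triToeplitz {α : Type*} [Zero α] (k : ℕ) (d e f : α) : Matrix (Fin k) (Fin k) α :=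
  Matrix.of fun i j =>
    if (i : ℕ) = j then d else if (j : ℕ) = i + 1 then e
    else if (i : ℕ) = j + 1 then f else 0

section Det

variable {α : Type*} [CommRing α] (k : ℕ) (d e f : α)

lemma triToeplitz_submatrix_succ :
    (triToeplitz (k + 1) d e f).submatrix Fin.succ Fin.succ = triToeplitz k d e f := by
  ext i j
  simp only [submatrix_apply, triToeplitz, of_apply, Fin.val_succ]
  split_ifs <;> first | rfl | omega

lemma det_triToeplitz_submatrix_succAbove_one :
    ((triToeplitz (k + 2) d e f).submatrix (Fin.succ 0).succAbove Fin.succ).det =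
      e * (triToeplitz k d e f).det := by
  set N := (triToeplitz (k + 2) d e f).submatrix (Fin.succ 0).succAbove Fin.succ
  have hrow : ∀ j : Fin k, N 0 j.succ = 0 := fun j => by
    simp [N, triToeplitz]
  have hminor : N.submatrix Fin.succ (Fin.succAbove 0) = triToeplitz k d e f := by
    rw [← triToeplitz_submatrix_succ k, ← triToeplitz_submatrix_succ (k + 1)]
    ext i j
    simp [N]
  rw [det_succ_row_zero, Fin.sum_univ_succ, Finset.sum_eq_zero fun j _ => by rw [hrow]; ring,
    hminor]
  simp [N, triToeplitz]

lemma det_triToeplitz_succ_succ :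
    (triToeplitz (k + 2) d e f).det =
      d * (triToeplitz (k + 1) d e f).det - e * f * (triToeplitz k d e f).det := by
  have hcol : ∀ i : Fin k, triToeplitz (k + 2) d e f i.succ.succ 0 = 0 := fun i => by
    simp [triToeplitz]
  rw [det_succ_column_zero, Fin.sum_univ_succ, Fin.sum_univ_succ,
    Finset.sum_eq_zero fun i _ => by rw [hcol]; ring, Fin.succAbove_zero,
    triToeplitz_submatrix_succ, det_triToeplitz_submatrix_succAbove_one]
  simp [triToeplitz]
  ring

end Det

section Charpoly

variable {R : Type*} [CommRing R] (a b c : R)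

lemma charmatrix_triToeplitz (k : ℕ) :
    charmatrix (triToeplitz k a b c) = triToeplitz k (X - C a) (-C b) (-C c) := by
  ext i j
  by_cases h : i = j
  · subst h
    simp [triToeplitz]
  · have hv : (i : ℕ) ≠ j := Fin.val_ne_of_ne h
    rw [charmatrix_apply_ne _ _ _ h]
    simp only [triToeplitz, of_apply, if_neg hv]
    split_ifs <;> simp

lemma charpoly_triToeplitz_succ_succ (k : ℕ) :
    (triToeplitz (k + 2) a b c).charpoly =
      (X - C a) * (triToeplitz (k + 1) a b c).charpoly -
        C b * C c * (triToeplitz k a b c).charpoly := by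
  simp only [charpoly, charmatrix_triToeplitz, det_triToeplitz_succ_succ]
  ring

theorem charpoly_triToeplitz_eq_C_pow_mul (u : ℕ → R[X]) (h0 : u 0 = 1)
    (h1 : X * u 0 = C a * u 0 + C b * u 1)
    (hrec : ∀ k, X * u (k + 1) = C c * u k + C a * u (k + 1) + C b * u (k + 2)) (k : ℕ) :
    (triToeplitz k a b c).charpoly = C b ^ k * u k := by
  induction k using Nat.twoStepInduction with
  | zero => simp [h0, charpoly_isEmpty]
  | one =>
    rw [charpoly, charmatrix_triToeplitz, det_fin_one]
    simp only [triToeplitz, of_apply, if_true]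
    linear_combination h1 - (X - C a) * h0
  | more k ih0 ih1 =>
    rw [charpoly_triToeplitz_succ_succ, ih0, ih1]
    linear_combination C b ^ (k + 1) * hrec k

end Charpoly

def finEvenOddEquiv (t : ℕ) : Fin t ⊕ Fin t ≃ Fin (2 * t) where
  toFun := Sum.elim (fun i => ⟨2 * i, by omega⟩) (fun i => ⟨2 * i + 1, by omega⟩)
  invFun k := if (k : ℕ) % 2 = 0 then .inl ⟨k / 2, by omega⟩ else .inr ⟨k / 2, by omega⟩
  left_inv := by
    rintro (i | i) <;> simp [Fin.ext_iff]; omega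
  right_inv k := by
    by_cases h : (k : ℕ) % 2 = 0 <;> simp [h, Fin.ext_iff] <;> omega

lemma pentaK_submatrix_finEvenOddEquiv (t : ℕ) (a1 a2 b1 b2 c1 c2 : ℂ) :
    (pentaK (2 * t) a1 a2 b1 b2 c1 c2).submatrix (finEvenOddEquiv t) (finEvenOddEquiv t) =
      fromBlocks (triToeplitz t a1 b1 c1) 0 0 (triToeplitz t a2 b2 c2) := by
  ext (i | i) (j | j) <;>
    simp only [submatrix_apply, finEvenOddEquiv, Equiv.coe_fn_mk, Sum.elim_inl, Sum.elim_inr,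
      fromBlocks_apply₁₁, fromBlocks_apply₁₂, fromBlocks_apply₂₁, fromBlocks_apply₂₂,
      pentaK, triToeplitz, of_apply, Matrix.zero_apply] <;>
    split_ifs <;> first | rfl | omega

theorem stmt6_general (a1 a2 b1 b2 c1 c2 : ℂ)
    (t : ℕ) (n : ℕ) (hn : n = 2 * t)
    (A B : ℕ → Polynomial ℂ)
    (A1 : A 1 = 1)
    (hAr1 : Polynomial.X * A 1 = Polynomial.C a2 * A 1 + Polynomial.C b2 * A 3)
    (hAeven : ∀ i, 3 ≤ i → Even i →
      Polynomial.X * A (i - 1) =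
        Polynomial.C c2 * A (i - 3) + Polynomial.C a2 * A (i - 1) + Polynomial.C b2 * A (i + 1))
    (B0 : B 0 = 1)
    (hBr0 : Polynomial.X * B 0 = Polynomial.C a1 * B 0 + Polynomial.C b1 * B 2)
    (hBodd : ∀ i, 3 ≤ i → Odd i →
      Polynomial.X * B (i - 1) =
        Polynomial.C c1 * B (i - 3) + Polynomial.C a1 * B (i - 1) + Polynomial.C b1 * B (i + 1)) :
    (pentaK n a1 a2 b1 b2 c1 c2).charpoly =
      Polynomial.C ((b1 * b2) ^ t) * A (n + 1) * B n := by
  subst hn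
  have hodd := charpoly_triToeplitz_eq_C_pow_mul a2 b2 c2 (fun k => A (2 * k + 1)) A1 hAr1
    (fun k => hAeven (2 * k + 4) (by omega) ⟨k + 2, by ring⟩) t
  have heven := charpoly_triToeplitz_eq_C_pow_mul a1 b1 c1 (fun k => B (2 * k)) B0 hBr0
    (fun k => hBodd (2 * k + 3) (by omega) ⟨k + 1, by ring⟩) t
  rw [← charpoly_reindex (finEvenOddEquiv t).symm, reindex_apply, Equiv.symm_symm,
    pentaK_submatrix_finEvenOddEquiv, charpoly_fromBlocks_zero₁₂, hodd, heven]
  simp only [mul_pow, C_mul, C_pow]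
  ring

theorem stmt6 (a1 a2 b1 b2 c1 c2 : ℂ) (hb1 : b1 ≠ 0) (hb2 : b2 ≠ 0) (hc1 : c1 ≠ 0) (hc2 : c2 ≠ 0)
    (t : ℕ) (ht : 1 ≤ t) (n : ℕ) (hn : n = 2 * t)
    (A B : ℕ → Polynomial ℂ)
    (A0 : A 0 = 0) (A1 : A 1 = 1)
    (hAr0 : Polynomial.X * A 0 = Polynomial.C a1 * A 0 + Polynomial.C b1 * A 2)
    (hAr1 : Polynomial.X * A 1 = Polynomial.C a2 * A 1 + Polynomial.C b2 * A 3)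
    (hAodd : ∀ i, 3 ≤ i → Odd i →
      Polynomial.X * A (i - 1) =
        Polynomial.C c1 * A (i - 3) + Polynomial.C a1 * A (i - 1) + Polynomial.C b1 * A (i + 1))
    (hAeven : ∀ i, 3 ≤ i → Even i →
      Polynomial.X * A (i - 1) =
        Polynomial.C c2 * A (i - 3) + Polynomial.C a2 * A (i - 1) + Polynomial.C b2 * A (i + 1))
    (B0 : B 0 = 1) (B1 : B 1 = 0)
    (hBr0 : Polynomial.X * B 0 = Polynomial.C a1 * B 0 + Polynomial.C b1 * B 2)
    (hBr1 : Polynomial.X * B 1 = Polynomial.C a2 * B 1 + Polynomial.C b2 * B 3)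
    (hBodd : ∀ i, 3 ≤ i → Odd i →
      Polynomial.X * B (i - 1) =
        Polynomial.C c1 * B (i - 3) + Polynomial.C a1 * B (i - 1) + Polynomial.C b1 * B (i + 1))
    (hBeven : ∀ i, 3 ≤ i → Even i →
      Polynomial.X * B (i - 1) =
        Polynomial.C c2 * B (i - 3) + Polynomial.C a2 * B (i - 1) + Polynomial.C b2 * B (i + 1)) :
    (pentaK n a1 a2 b1 b2 c1 c2).charpoly =
      Polynomial.C ((b1 * b2) ^ t) * A (n + 1) * B n :=
  stmt6_general a1 a2 b1 b2 c1 c2 t n hn A B A1 hAr1 hAeven B0 hBr0 hBodd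
end

section
/- For n even, b_2^{n/2} · A_{n+1}(x) = (b_2·c_2)^{n/4} · U_{n/2}((x − a_2)/(2·√(b_2·c_2))), where U_m denotes the m-th Chebyshev polynomial of the second kind and A_{n+1} is the associated recurrence polynomial. (Here √(b_2·c_2) is a fixed square root of b_2·c_2, and the identity holds as polynomials in x.) -/
/-! The odd-indexed polynomials `A (2m+1)` only see the second coefficient set: the even-index
recurrence gives `b₂ A(2m+5) = (X - a₂) A(2m+3) - c₂ A(2m+1)`. Rescaling by `b₂^m` turns this into
`w (m+2) = (X - a₂) w (m+1) - s² w m` with `s² = b₂ c₂`, which is the Chebyshev `U` recurrence in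
the variable `(X - a₂)/(2s)`, homogenised by powers of `s`. -/

open Polynomial Matrix

theorem eq_C_pow_mul_chebyshevU_comp_of_recurrence {R : Type*} [CommRing R] (s : R) (q : R[X])
    (w : ℕ → R[X]) (h0 : w 0 = 1) (h1 : w 1 = 2 * C s * q)
    (hrec : ∀ m, w (m + 2) = 2 * C s * q * w (m + 1) - C s ^ 2 * w m) (m : ℕ) :
    w m = C s ^ m * (Chebyshev.U R m).comp q := by
  induction m using Nat.twoStepInduction with
  | zero => simp [h0]
  | one =>
    simp only [h1, pow_one, Nat.cast_one, Chebyshev.U_one, mul_comp, X_comp, ofNat_comp]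
    ring
  | more m ih₀ ih₁ =>
    have hU : Chebyshev.U R ((m + 2 : ℕ) : ℤ) =
        2 * X * Chebyshev.U R ((m + 1 : ℕ) : ℤ) - Chebyshev.U R (m : ℤ) := by
      push_cast
      exact Chebyshev.U_add_two R m
    rw [hrec, ih₀, ih₁, hU]
    simp only [sub_comp, mul_comp, X_comp, ofNat_comp]
    ring

theorem stmt8_general (a2 b2 c2 : ℂ) (hb2 : b2 ≠ 0) (hc2 : c2 ≠ 0)
    (t : ℕ) (n : ℕ) (hn : n = 2 * t)
    (s : ℂ) (hs : s ^ 2 = b2 * c2)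
    (A : ℕ → Polynomial ℂ)
    (A1 : A 1 = 1)
    (hAr1 : Polynomial.X * A 1 = Polynomial.C a2 * A 1 + Polynomial.C b2 * A 3)
    (hAeven : ∀ i, 3 ≤ i → Even i →
      Polynomial.X * A (i - 1) =
        Polynomial.C c2 * A (i - 3) + Polynomial.C a2 * A (i - 1) + Polynomial.C b2 * A (i + 1)) :
    Polynomial.C (b2 ^ t) * A (n + 1) =
      Polynomial.C (s ^ t) *
        (Polynomial.Chebyshev.U ℂ (t : ℤ)).comp
          (Polynomial.C (2 * s)⁻¹ * (Polynomial.X - Polynomial.C a2)) := by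
  subst hn
  have hs0 : s ≠ 0 := by
    rintro rfl
    exact mul_ne_zero hb2 hc2 (by simpa using hs.symm)
  have hq : 2 * C s * (C (2 * s)⁻¹ * (X - C a2)) = X - C a2 := by
    rw [← mul_assoc, ← C_ofNat, ← C_mul, ← C_mul, mul_inv_cancel₀ (mul_ne_zero two_ne_zero hs0),
      C_1, one_mul]
  have hstep : ∀ m, C b2 * A (2 * (m + 2) + 1) =
      (X - C a2) * A (2 * (m + 1) + 1) - C c2 * A (2 * m + 1) := by
    intro m
    have h := hAeven (2 * m + 4) (by omega) ⟨m + 2, by ring⟩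
    rw [show 2 * m + 4 - 1 = 2 * (m + 1) + 1 by omega, show 2 * m + 4 - 3 = 2 * m + 1 by omega,
      show 2 * m + 4 + 1 = 2 * (m + 2) + 1 by omega] at h
    linear_combination -h
  rw [C_pow, C_pow]
  refine eq_C_pow_mul_chebyshevU_comp_of_recurrence s _ (fun m => C b2 ^ m * A (2 * m + 1))
    (by simp [A1]) ?_ (fun m => ?_) t
  · rw [hq]
    linear_combination -hAr1 + (X - C a2) * A1
  · have hsC : C s ^ 2 = C b2 * C c2 := by rw [← C_pow, hs, C_mul]
    rw [hq]
    linear_combination C b2 ^ (m + 1) * hstep m + C b2 ^ m * A (2 * m + 1) * hsC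

theorem stmt8 (a1 a2 b1 b2 c1 c2 : ℂ) (hb1 : b1 ≠ 0) (hb2 : b2 ≠ 0) (hc1 : c1 ≠ 0) (hc2 : c2 ≠ 0)
    (t : ℕ) (n : ℕ) (hn : n = 2 * t)
    (s : ℂ) (hs : s ^ 2 = b2 * c2)
    (A : ℕ → Polynomial ℂ)
    (A0 : A 0 = 0) (A1 : A 1 = 1)
    (hAr0 : Polynomial.X * A 0 = Polynomial.C a1 * A 0 + Polynomial.C b1 * A 2)
    (hAr1 : Polynomial.X * A 1 = Polynomial.C a2 * A 1 + Polynomial.C b2 * A 3)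
    (hAodd : ∀ i, 3 ≤ i → Odd i →
      Polynomial.X * A (i - 1) =
        Polynomial.C c1 * A (i - 3) + Polynomial.C a1 * A (i - 1) + Polynomial.C b1 * A (i + 1))
    (hAeven : ∀ i, 3 ≤ i → Even i →
      Polynomial.X * A (i - 1) =
        Polynomial.C c2 * A (i - 3) + Polynomial.C a2 * A (i - 1) + Polynomial.C b2 * A (i + 1)) :
    Polynomial.C (b2 ^ t) * A (n + 1) =
      Polynomial.C (s ^ t) *
        (Polynomial.Chebyshev.U ℂ (t : ℤ)).comp
          (Polynomial.C (2 * s)⁻¹ * (Polynomial.X - Polynomial.C a2)) :=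
  stmt8_general a2 b2 c2 hb2 hc2 t n hn s hs A A1 hAr1 hAeven
end

section
/- For n even, b_1^{n/2} · B_n(x) = (b_1·c_1)^{n/4} · U_{n/2}((x − a_1)/(2·√(b_1·c_1))), where U_m is the m-th Chebyshev polynomial of the second kind and B_n is the associated recurrence polynomial. (Here √(b_1·c_1) is a fixed square root of b_1·c_1, and the identity holds as polynomials in x.) -/
open Polynomial Matrix

/-!
Along the even indices the recurrence decouples from the odd ones:
`X B_{2m+2} = c₁ B_{2m} + a₁ B_{2m+2} + b₁ B_{2m+4}`, a three-term recurrence with constant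
coefficients. Rescaling by `b₁^m / s^m`, where `s² = b₁ c₁`, turns it into the Chebyshev
recurrence `U_{m+2}(y) = 2y U_{m+1}(y) - U_m(y)` at `y = (X - a₁) / (2s)`, and the initial
values `B_0 = 1`, `b₁ B_2 = X - a₁` match `U_0 = 1`, `U_1(y) = 2y`.
-/

namespace Polynomial.Chebyshev

theorem eval_U_natCast_add_two {R : Type*} [CommRing R] (y : R) (m : ℕ) :
    (U R ((m + 2 : ℕ) : ℤ)).eval y =
      2 * y * (U R ((m + 1 : ℕ) : ℤ)).eval y - (U R (m : ℤ)).eval y := by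
  push_cast
  simp [U_add_two]

theorem U_comp_eq_eval_map {R : Type*} [CommRing R] (n : ℤ) (p : R[X]) :
    (U R n).comp p = (U R[X] n).eval p := by
  rw [← map_U (Polynomial.C : R →+* R[X]) n, eval_map]
  rfl

/-- The scaling is by `s ^ m` rather than a division so that no invertibility is needed. -/
theorem pow_mul_eq_pow_mul_eval_U_of_recurrence {A : Type*} [CommRing A] {a b c s x y : A}
    (hs : s ^ 2 = b * c) (hy : 2 * s * y = x - a) {e : ℕ → A} (h0 : e 0 = 1)
    (h1 : b * e 1 = x - a)
    (hrec : ∀ m, x * e (m + 1) = c * e m + a * e (m + 1) + b * e (m + 2)) (m : ℕ) :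
    b ^ m * e m = s ^ m * (U A m).eval y := by
  induction m using Nat.twoStepInduction with
  | zero => simp [h0]
  | one =>
    simp only [pow_one, h1, ← hy, Nat.cast_one, U_one, eval_mul, eval_ofNat, eval_X]
    ring
  | more m ih0 ih1 =>
    rw [eval_U_natCast_add_two]
    linear_combination (-b ^ (m + 1)) * hrec m + (x - a) * ih1 - c * b * ih0
      - s ^ (m + 1) * (U A ((m + 1 : ℕ) : ℤ)).eval y * hy + s ^ m * (U A m).eval y * hs

end Polynomial.Chebyshev

theorem stmt9_general (a1 b1 c1 : ℂ) (hb1 : b1 ≠ 0) (hc1 : c1 ≠ 0)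
    (t : ℕ) (n : ℕ) (hn : n = 2 * t)
    (s : ℂ) (hs : s ^ 2 = b1 * c1)
    (B : ℕ → Polynomial ℂ)
    (B0 : B 0 = 1)
    (hBr0 : Polynomial.X * B 0 = Polynomial.C a1 * B 0 + Polynomial.C b1 * B 2)
    (hBodd : ∀ i, 3 ≤ i → Odd i →
      Polynomial.X * B (i - 1) =
        Polynomial.C c1 * B (i - 3) + Polynomial.C a1 * B (i - 1) + Polynomial.C b1 * B (i + 1)) :
    Polynomial.C (b1 ^ t) * B n =
      Polynomial.C (s ^ t) *
        (Polynomial.Chebyshev.U ℂ (t : ℤ)).comp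
          (Polynomial.C (2 * s)⁻¹ * (Polynomial.X - Polynomial.C a1)) := by
  have hs0 : s ≠ 0 := by
    rintro rfl
    exact mul_ne_zero hb1 hc1 (by simpa using hs.symm)
  have hy : 2 * C s * (C (2 * s)⁻¹ * (X - C a1)) = X - C a1 := by
    rw [← mul_assoc, show (2 : ℂ[X]) * C s = C (2 * s) by rw [C_mul, C_ofNat], ← C_mul,
      mul_inv_cancel₀ (mul_ne_zero two_ne_zero hs0), C_1, one_mul]
  have h1 : C b1 * B 2 = X - C a1 := by
    rw [B0, mul_one, mul_one] at hBr0
    linear_combination -hBr0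
  have hrec (m : ℕ) : X * B (2 * (m + 1)) =
      C c1 * B (2 * m) + C a1 * B (2 * (m + 1)) + C b1 * B (2 * (m + 2)) := by
    simpa [show 2 * (m + 1) = 2 * m + 3 - 1 by omega, show 2 * (m + 2) = 2 * m + 3 + 1 by omega]
      using hBodd (2 * m + 3) (by omega) ⟨m + 1, by ring⟩
  rw [map_pow, map_pow, hn, Chebyshev.U_comp_eq_eval_map]
  exact Chebyshev.pow_mul_eq_pow_mul_eval_U_of_recurrence (by rw [← map_pow, hs, C_mul]) hy
    (e := fun m ↦ B (2 * m)) B0 h1 hrec t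

theorem stmt9 (a1 a2 b1 b2 c1 c2 : ℂ) (hb1 : b1 ≠ 0) (hb2 : b2 ≠ 0) (hc1 : c1 ≠ 0) (hc2 : c2 ≠ 0)
    (t : ℕ) (n : ℕ) (hn : n = 2 * t)
    (s : ℂ) (hs : s ^ 2 = b1 * c1)
    (B : ℕ → Polynomial ℂ)
    (B0 : B 0 = 1) (B1 : B 1 = 0)
    (hBr0 : Polynomial.X * B 0 = Polynomial.C a1 * B 0 + Polynomial.C b1 * B 2)
    (hBr1 : Polynomial.X * B 1 = Polynomial.C a2 * B 1 + Polynomial.C b2 * B 3)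
    (hBodd : ∀ i, 3 ≤ i → Odd i →
      Polynomial.X * B (i - 1) =
        Polynomial.C c1 * B (i - 3) + Polynomial.C a1 * B (i - 1) + Polynomial.C b1 * B (i + 1))
    (hBeven : ∀ i, 3 ≤ i → Even i →
      Polynomial.X * B (i - 1) =
        Polynomial.C c2 * B (i - 3) + Polynomial.C a2 * B (i - 1) + Polynomial.C b2 * B (i + 1)) :
    Polynomial.C (b1 ^ t) * B n =
      Polynomial.C (s ^ t) *
        (Polynomial.Chebyshev.U ℂ (t : ℤ)).comp
          (Polynomial.C (2 * s)⁻¹ * (Polynomial.X - Polynomial.C a1)) :=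
  stmt9_general a1 b1 c1 hb1 hc1 t n hn s hs B B0 hBr0 hBodd
end

section
/- For n even, the characteristic polynomial of the pentadiagonal 2-Toeplitz matrix K_n equals (b_1·c_1·b_2·c_2)^{n/4} · U_{n/2}((x−a_1)/(2√(b_1c_1))) · U_{n/2}((x−a_2)/(2√(b_2c_2))), where U_m is the Chebyshev polynomial of the second kind. Consequently, the n eigenvalues of K_n are a_1 − 2√(b_1c_1)·cos((k+1)π/(n+2)) for odd indices k and a_2 − 2√(b_2c_2)·cos(kπ/(n+2)) for even indices k, with 1 ≤ k ≤ n. -/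
/-!
Reindexing by parity, `K_{2t}` becomes block diagonal with the two `t × t` tridiagonal Toeplitz
blocks `T_t(a₁, b₁, c₁)` and `T_t(a₂, b₂, c₂)`. Expanding along the first row,
`D_t = det T_t(a, b, c)` satisfies `D_{t+2} = a D_{t+1} - b c D_t`, which for `a = 2 s x` and
`b c = s²` is the recurrence of `s^t U_t(x)`. Applied to the characteristic matrix this gives the
factorization, and the eigenvalues come from the zeros `cos (j π / (t + 1))`, `1 ≤ j ≤ t`, of `U_t`.
-/

open Polynomial Matrix

namespace Polynomial.Chebyshev

lemma U_eval_eq_comp {R : Type*} [CommRing R] (n : ℤ) (q : R[X]) :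
    (U R[X] n).eval q = (U R n).comp q := by
  rw [← map_U Polynomial.C, eval_map]
  rfl

lemma U_complex_eval_cos_eq_zero {n j : ℕ} (hj : 1 ≤ j) (hjn : j ≤ n) :
    (U ℂ n).eval (Real.cos (j * Real.pi / (n + 1)) : ℂ) = 0 := by
  set θ : ℝ := j * Real.pi / (n + 1)
  have hθ : 0 < θ ∧ θ < Real.pi := by
    have hj' : (j : ℝ) < n + 1 := by exact_mod_cast Nat.lt_succ_of_le hjn
    refine ⟨by positivity, ?_⟩
    rw [div_lt_iff₀ (by positivity)]
    nlinarith [Real.pi_pos]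
  have hsin : Complex.sin θ ≠ 0 := by
    exact_mod_cast (Real.sin_pos_of_pos_of_lt_pi hθ.1 hθ.2).ne'
  have hangle : ((n : ℤ) + 1 : ℂ) * θ = j * Real.pi := by
    simp only [θ]
    push_cast
    field_simp
  have key := U_complex_cos (θ : ℂ) n
  rw [hangle, Complex.sin_nat_mul_pi, ← Complex.ofReal_cos] at key
  exact (mul_eq_zero.1 key).resolve_right hsin

lemma isRoot_U_comp_sub_two_mul_cos {s : ℂ} (hs : s ≠ 0) (a : ℂ) {n j : ℕ} (hj : 1 ≤ j)
    (hjn : j ≤ n) :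
    ((U ℂ n).comp (Polynomial.C (2 * s)⁻¹ * (X - Polynomial.C a))).IsRoot
      (a - 2 * s * Real.cos (j * Real.pi / (n + 1))) := by
  have hx : (2 * s)⁻¹ * (a - 2 * s * Real.cos (j * Real.pi / (n + 1)) - a) =
      -Real.cos (j * Real.pi / (n + 1)) := by
    field_simp
    ring
  simp only [IsRoot, eval_comp, eval_mul, eval_C, eval_sub, eval_X, hx, U_eval_neg,
    U_complex_eval_cos_eq_zero hj hjn, mul_zero]

end Polynomial.Chebyshev

namespace Matrix

section Tridiagonal

variable {R : Type*} [CommRing R]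

def tridiagToeplitz (n : ℕ) (a b c : R) : Matrix (Fin n) (Fin n) R :=
  of fun i j =>
    if (i : ℕ) = j then a else if (j : ℕ) = i + 1 then b else if (i : ℕ) = j + 1 then c else 0

@[simp]
lemma tridiagToeplitz_submatrix_succ (n : ℕ) (a b c : R) :
    (tridiagToeplitz (n + 1) a b c).submatrix Fin.succ Fin.succ = tridiagToeplitz n a b c := by
  ext i j
  simp [tridiagToeplitz]

lemma det_tridiagToeplitz_add_two (n : ℕ) (a b c : R) :
    (tridiagToeplitz (n + 2) a b c).det =
      a * (tridiagToeplitz (n + 1) a b c).det - b * c * (tridiagToeplitz n a b c).det := by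
  set T := tridiagToeplitz (n + 2) a b c
  -- the minor of the entry `b`: its first column is `c` followed by zeros
  have hminor : (T.submatrix Fin.succ (Fin.succ 0).succAbove).det =
      c * (tridiagToeplitz n a b c).det := by
    have hsub : (T.submatrix Fin.succ (Fin.succ 0).succAbove).submatrix (Fin.succAbove 0)
        Fin.succ = tridiagToeplitz n a b c := by
      ext i j
      simp [T, tridiagToeplitz, Fin.succAbove]
    rw [det_succ_column_zero, Fin.sum_univ_succ, Finset.sum_eq_zero, hsub]
    · simp [T, tridiagToeplitz]
    · intro i _
      simp [T, tridiagToeplitz]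
  rw [det_succ_row_zero, Fin.sum_univ_succ, Fin.sum_univ_succ, Finset.sum_eq_zero, hminor,
    Fin.succAbove_zero, tridiagToeplitz_submatrix_succ]
  · simp only [Nat.succ_eq_add_one, Fin.coe_ofNat_eq_mod, Nat.zero_mod, pow_zero, tridiagToeplitz,
      of_apply, ↓reduceIte, one_mul, Fin.succ_zero_eq_one, Nat.one_mod, pow_one, zero_ne_one,
      zero_add, neg_mul, add_zero, T]
    ring
  · intro j _
    simp [T, tridiagToeplitz]

lemma charmatrix_tridiagToeplitz (n : ℕ) (a b c : R) :
    charmatrix (tridiagToeplitz n a b c) = tridiagToeplitz n (X - C a) (-C b) (-C c) := by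
  ext i j
  by_cases hij : i = j
  · subst hij
    simp [tridiagToeplitz]
  · simp only [charmatrix_apply_ne _ _ _ hij, tridiagToeplitz, of_apply,
      if_neg (Fin.val_ne_of_ne hij)]
    split_ifs <;> simp

lemma det_tridiagToeplitz_eq_U_eval {b c s : R} (hbc : b * c = s ^ 2) (x : R) (n : ℕ) :
    (tridiagToeplitz n (2 * s * x) b c).det = s ^ n * (Chebyshev.U R n).eval x := by
  induction n using Nat.twoStepInduction with
  | zero => simp
  | one =>
    simp only [tridiagToeplitz, Fin.val_eq_zero, ↓reduceIte, det_unique, Fin.default_eq_zero,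
      of_apply, pow_one, Nat.cast_one, Chebyshev.U_one, eval_mul, eval_ofNat, eval_X]
    ring
  | more n ih₀ ih₁ =>
    rw [det_tridiagToeplitz_add_two, ih₀, ih₁, hbc]
    push_cast
    rw [Chebyshev.U_add_two]
    simp only [eval_sub, eval_mul, eval_X, eval_ofNat]
    ring

lemma charpoly_tridiagToeplitz {K : Type*} [Field K] {a b c s : K} (hbc : b * c = s ^ 2)
    (hs : 2 * s ≠ 0) (n : ℕ) :
    (tridiagToeplitz n a b c).charpoly =
      C (s ^ n) * (Chebyshev.U K n).comp (C (2 * s)⁻¹ * (X - C a)) := by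
  have hX : X - C a = 2 * C s * (C (2 * s)⁻¹ * (X - C a)) := by
    rw [← mul_assoc, ← C_ofNat, ← C_mul, ← C_mul, mul_inv_cancel₀ hs, C_1, one_mul]
  have hbc' : -C b * -C c = C s ^ 2 := by
    rw [neg_mul_neg, ← C_mul, hbc, C_pow]
  rw [charpoly, charmatrix_tridiagToeplitz, hX, det_tridiagToeplitz_eq_U_eval hbc',
    Chebyshev.U_eval_eq_comp, ← hX, C_pow]

end Tridiagonal

variable {R m o : Type*} [CommRing R] [Fintype m] [DecidableEq m] [Fintype o] [DecidableEq o]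

lemma charmatrix_blockDiagonal (M : o → Matrix m m R) :
    charmatrix (blockDiagonal M) = blockDiagonal fun k => charmatrix (M k) := by
  ext ⟨i, k⟩ ⟨j, l⟩ : 1
  by_cases hkl : k = l
  · subst hkl
    simp [charmatrix_apply, diagonal_apply]
  · simp [blockDiagonal_apply_ne _ _ _ hkl, hkl]

lemma charpoly_blockDiagonal (M : o → Matrix m m R) :
    (blockDiagonal M).charpoly = ∏ k, (M k).charpoly := by
  rw [charpoly, charmatrix_blockDiagonal, det_blockDiagonal]
  rfl

lemma hasEigenvalue_toLin'_iff_isRoot_charpoly [IsDomain R] (A : Matrix m m R) (μ : R) :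
    Module.End.HasEigenvalue A.toLin' μ ↔ A.charpoly.IsRoot μ := by
  rw [Module.End.hasEigenvalue_iff_isRoot_charpoly, charpoly_toLin']

end Matrix

/-- `(i, k) ↦ 2 * i + k`, so that the second coordinate is the parity. -/
def finProdFinTwoEquiv (t : ℕ) : Fin t × Fin 2 ≃ Fin (2 * t) :=
  finProdFinEquiv.trans (finCongr (mul_comm t 2))

lemma pentaK_submatrix_finProdFinTwoEquiv (t : ℕ) (a1 a2 b1 b2 c1 c2 : ℂ) :
    (pentaK (2 * t) a1 a2 b1 b2 c1 c2).submatrix (finProdFinTwoEquiv t) (finProdFinTwoEquiv t) =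
      blockDiagonal ![tridiagToeplitz t a1 b1 c1, tridiagToeplitz t a2 b2 c2] := by
  ext ⟨i, k⟩ ⟨j, l⟩
  fin_cases k <;> fin_cases l <;>
    simp [pentaK, tridiagToeplitz, finProdFinTwoEquiv, blockDiagonal_apply] <;>
    split_ifs <;> first | rfl | omega

lemma charpoly_pentaK_two_mul (t : ℕ) (a1 a2 b1 b2 c1 c2 : ℂ) :
    (pentaK (2 * t) a1 a2 b1 b2 c1 c2).charpoly =
      (tridiagToeplitz t a1 b1 c1).charpoly * (tridiagToeplitz t a2 b2 c2).charpoly := by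
  rw [← charpoly_reindex (finProdFinTwoEquiv t).symm, reindex_apply, Equiv.symm_symm,
    pentaK_submatrix_finProdFinTwoEquiv, charpoly_blockDiagonal, Fin.prod_univ_two]
  rfl

theorem stmt10_general (a1 a2 b1 b2 c1 c2 : ℂ) (hb1 : b1 ≠ 0) (hb2 : b2 ≠ 0) (hc1 : c1 ≠ 0) (hc2 : c2 ≠ 0)
    (t : ℕ) (n : ℕ) (hn : n = 2 * t)
    (s1 s2 : ℂ) (hs1 : s1 ^ 2 = b1 * c1) (hs2 : s2 ^ 2 = b2 * c2) :
    (pentaK n a1 a2 b1 b2 c1 c2).charpoly =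
      Polynomial.C ((s1 * s2) ^ t) *
        (Polynomial.Chebyshev.U ℂ (t : ℤ)).comp
          (Polynomial.C (2 * s1)⁻¹ * (Polynomial.X - Polynomial.C a1)) *
        (Polynomial.Chebyshev.U ℂ (t : ℤ)).comp
          (Polynomial.C (2 * s2)⁻¹ * (Polynomial.X - Polynomial.C a2)) ∧
    (∀ k : ℕ, 1 ≤ k → k ≤ n → Odd k →
      Module.End.HasEigenvalue (Matrix.toLin' (pentaK n a1 a2 b1 b2 c1 c2))
        (a1 - 2 * s1 * (Real.cos ((k + 1) * Real.pi / (n + 2)) : ℂ))) ∧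
    (∀ k : ℕ, 1 ≤ k → k ≤ n → Even k →
      Module.End.HasEigenvalue (Matrix.toLin' (pentaK n a1 a2 b1 b2 c1 c2))
        (a2 - 2 * s2 * (Real.cos (k * Real.pi / (n + 2)) : ℂ))) := by
  have hs1ne : s1 ≠ 0 := by
    rintro rfl
    exact mul_ne_zero hb1 hc1 (by rw [← hs1]; ring)
  have hs2ne : s2 ≠ 0 := by
    rintro rfl
    exact mul_ne_zero hb2 hc2 (by rw [← hs2]; ring)
  subst hn
  have hcp : (pentaK (2 * t) a1 a2 b1 b2 c1 c2).charpoly =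
      C ((s1 * s2) ^ t) * (Chebyshev.U ℂ t).comp (C (2 * s1)⁻¹ * (X - C a1)) *
        (Chebyshev.U ℂ t).comp (C (2 * s2)⁻¹ * (X - C a2)) := by
    rw [charpoly_pentaK_two_mul, charpoly_tridiagToeplitz hs1.symm (mul_ne_zero two_ne_zero hs1ne),
      charpoly_tridiagToeplitz hs2.symm (mul_ne_zero two_ne_zero hs2ne), mul_pow, C_mul]
    ring
  refine ⟨hcp, ?_, ?_⟩
  · rintro k hk₁ hk₂ ⟨m, rfl⟩
    have hangle : (((2 * m + 1 : ℕ) : ℝ) + 1) * Real.pi / ((2 * t : ℕ) + 2) =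
        (m + 1 : ℕ) * Real.pi / (t + 1) := by
      push_cast
      field_simp
      ring
    rw [hasEigenvalue_toLin'_iff_isRoot_charpoly, hcp, hangle]
    exact root_mul_right_of_isRoot _ <| root_mul_left_of_isRoot _ <|
      Chebyshev.isRoot_U_comp_sub_two_mul_cos hs1ne a1 (by omega) (by omega)
  · rintro k hk₁ hk₂ ⟨m, rfl⟩
    have hangle : ((m + m : ℕ) : ℝ) * Real.pi / ((2 * t : ℕ) + 2) = m * Real.pi / (t + 1) := by
      push_cast
      field_simp
      ring
    rw [hasEigenvalue_toLin'_iff_isRoot_charpoly, hcp, hangle]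
    exact root_mul_left_of_isRoot _ <|
      Chebyshev.isRoot_U_comp_sub_two_mul_cos hs2ne a2 (by omega) (by omega)

theorem stmt10 (a1 a2 b1 b2 c1 c2 : ℂ) (hb1 : b1 ≠ 0) (hb2 : b2 ≠ 0) (hc1 : c1 ≠ 0) (hc2 : c2 ≠ 0)
    (t : ℕ) (ht : 1 ≤ t) (n : ℕ) (hn : n = 2 * t)
    (s1 s2 : ℂ) (hs1 : s1 ^ 2 = b1 * c1) (hs2 : s2 ^ 2 = b2 * c2) :
    (pentaK n a1 a2 b1 b2 c1 c2).charpoly =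
      Polynomial.C ((s1 * s2) ^ t) *
        (Polynomial.Chebyshev.U ℂ (t : ℤ)).comp
          (Polynomial.C (2 * s1)⁻¹ * (Polynomial.X - Polynomial.C a1)) *
        (Polynomial.Chebyshev.U ℂ (t : ℤ)).comp
          (Polynomial.C (2 * s2)⁻¹ * (Polynomial.X - Polynomial.C a2)) ∧
    (∀ k : ℕ, 1 ≤ k → k ≤ n → Odd k →
      Module.End.HasEigenvalue (Matrix.toLin' (pentaK n a1 a2 b1 b2 c1 c2))
        (a1 - 2 * s1 * (Real.cos ((k + 1) * Real.pi / (n + 2)) : ℂ))) ∧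
    (∀ k : ℕ, 1 ≤ k → k ≤ n → Even k →
      Module.End.HasEigenvalue (Matrix.toLin' (pentaK n a1 a2 b1 b2 c1 c2))
        (a2 - 2 * s2 * (Real.cos (k * Real.pi / (n + 2)) : ℂ))) :=
  stmt10_general a1 a2 b1 b2 c1 c2 hb1 hb2 hc1 hc2 t n hn s1 s2 hs1 hs2
end

section
/- Let n be even and K_n the complex pentadiagonal 2-Toeplitz matrix. If a_1 ≠ 2√(b_1c_1)·cos((k+1)π/(n+2)) for all odd k with 1 ≤ k ≤ n, and a_2 ≠ 2√(b_2c_2)·cos(kπ/(n+2)) for all even k with 1 ≤ k ≤ n, then K_n is invertible. -/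
/-!
Splitting the indices by parity, `K_{2t}` is permutation-similar to the block-diagonal matrix
with blocks the `t × t` tridiagonal Toeplitz matrices `T(a₁, b₁, c₁)` and `T(a₂, b₂, c₂)`.
Writing `bc = s²` and `a = 2 s x`, the determinant of `T(a, b, c)` obeys the three-term
recurrence of the Chebyshev polynomials of the second kind, so it equals `s^t U_t(x)`. The roots
of `U_t` are `cos (kπ/(t+1))`, `1 ≤ k ≤ t`; as `n + 2 = 2(t + 1)`, these are the values excluded
by the hypotheses at the indices `2k - 1` for the first block and `2k` for the second.
-/

open Polynomial Matrix

open Polynomial.Chebyshev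

theorem eq_cos_of_U_complex_eval_eq_zero {m : ℕ} {z : ℂ} (hz : (U ℂ m).eval z = 0) :
    ∃ k < m, z = Real.cos ((k + 1) * Real.pi / (m + 1)) := by
  have hcard : Multiset.card (U ℝ m).roots = (U ℝ m).natDegree := by
    rw [roots_U_real, natDegree_U_natCast, Finset.card_val, Finset.card_image_of_injOn,
      Finset.card_range]
    exact (Finset.range m).nodup_map_iff_injOn.mp (roots_U_real_nodup m)
  have hroots := roots_map_of_injective_of_card_eq_natDegree Complex.ofRealHom.injective hcard
  rw [map_U, roots_U_real] at hroots
  have hmem : z ∈ (U ℂ m).roots := (mem_roots (U_ne_zero ℂ m (by omega))).mpr hz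
  simp only [← hroots, Finset.image_val, Multiset.mem_map, Multiset.mem_dedup, Finset.mem_val,
    Finset.mem_range] at hmem
  obtain ⟨_, ⟨k, hk, rfl⟩, rfl⟩ := hmem
  exact ⟨k, hk, rfl⟩

section Tridiagonal

variable {R : Type*} [CommRing R]

def tridiag (m : ℕ) (a b c : R) : Matrix (Fin m) (Fin m) R :=
  Matrix.of fun i j =>
    if i.val = j.val then a else if j.val = i.val + 1 then b else if i.val = j.val + 1 then c else 0

theorem det_succ_of_column_zero_eq_zero {n : ℕ} (A : Matrix (Fin (n + 1)) (Fin (n + 1)) R)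
    (h : ∀ i : Fin n, A i.succ 0 = 0) : A.det = A 0 0 * (A.submatrix Fin.succ Fin.succ).det := by
  rw [det_succ_column_zero, Fin.sum_univ_succ, Finset.sum_eq_zero fun i _ => by simp [h i]]
  simp

theorem tridiag_submatrix_succ (m : ℕ) (a b c : R) :
    (tridiag (m + 1) a b c).submatrix Fin.succ Fin.succ = tridiag m a b c := by
  ext i j
  simp [tridiag]

theorem det_tridiag_add_two (m : ℕ) (a b c : R) :
    (tridiag (m + 2) a b c).det =
      a * (tridiag (m + 1) a b c).det - b * c * (tridiag m a b c).det := by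
  rw [det_succ_row_zero, Fin.sum_univ_succ, Fin.sum_univ_succ,
    Finset.sum_eq_zero fun j _ => by simp [tridiag]]
  have hminor : ((tridiag (m + 2) a b c).submatrix Fin.succ (Fin.succAbove 1)).det =
      c * (tridiag m a b c).det := by
    rw [det_succ_of_column_zero_eq_zero _ fun i => by simp [tridiag]]
    have hblock : ((tridiag (m + 2) a b c).submatrix Fin.succ (Fin.succAbove 1)).submatrix
        Fin.succ Fin.succ = tridiag m a b c := by
      ext i j
      simp [tridiag]
    rw [hblock]
    simp [tridiag]
  have h00 : tridiag (m + 2) a b c 0 0 = a := by simp [tridiag]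
  have h01 : tridiag (m + 2) a b c 0 1 = b := by simp [tridiag]
  rw [Fin.succ_zero_eq_one, hminor, Fin.succAbove_zero, tridiag_submatrix_succ, h00, h01]
  simp only [Fin.coe_ofNat_eq_mod, Nat.zero_mod, Nat.one_mod, pow_zero, pow_one]
  ring

theorem det_tridiag_eq_mul_U_eval (m : ℕ) {b c s : R} (hs : s ^ 2 = b * c) (x : R) :
    (tridiag m (2 * s * x) b c).det = s ^ m * (U R m).eval x := by
  induction m using Nat.twoStepInduction with
  | zero => simp
  | one =>
    simp only [tridiag, det_unique, of_apply, Fin.default_eq_zero, Fin.val_zero, reduceIte, pow_one,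
      Nat.cast_one, U_one, eval_mul, eval_ofNat, eval_X]
    ring
  | more m ih₁ ih₂ =>
    rw [det_tridiag_add_two, ih₁, ih₂, ← hs]
    push_cast
    rw [U_add_two]
    simp only [eval_sub, eval_mul, eval_ofNat, eval_X]
    ring

end Tridiagonal

theorem det_tridiag_ne_zero {m : ℕ} {a b c s : ℂ} (hs : s ^ 2 = b * c) (hbc : b * c ≠ 0)
    (h : ∀ k < m, a ≠ 2 * s * (Real.cos ((k + 1) * Real.pi / (m + 1)) : ℂ)) :
    (tridiag m a b c).det ≠ 0 := by
  have hs0 : s ≠ 0 := by rintro rfl; simp_all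
  have ha : a = 2 * s * (a / (2 * s)) := by field_simp
  rw [ha, det_tridiag_eq_mul_U_eval m hs]
  refine mul_ne_zero (pow_ne_zero m hs0) fun hU => ?_
  obtain ⟨k, hk, hx⟩ := eq_cos_of_U_complex_eval_eq_zero hU
  exact h k hk (by rw [← hx, ← ha])

theorem pentaK_eq_reindex_blockDiagonal (t : ℕ) (a1 a2 b1 b2 c1 c2 : ℂ) :
    pentaK (t * 2) a1 a2 b1 b2 c1 c2 = reindex finProdFinEquiv finProdFinEquiv
      (blockDiagonal fun r => tridiag t (![a1, a2] r) (![b1, b2] r) (![c1, c2] r)) := by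
  ext i j
  -- `finProdFinEquiv (p, r) = 2 p + r`: the block index `r` is the parity of the index.
  obtain ⟨⟨p, r⟩, rfl⟩ := finProdFinEquiv.surjective i
  obtain ⟨⟨q, r'⟩, rfl⟩ := finProdFinEquiv.surjective j
  simp only [reindex_apply, submatrix_apply, Equiv.symm_apply_apply, blockDiagonal_apply, pentaK,
    tridiag, of_apply, finProdFinEquiv_apply_val, Fin.ext_iff]
  fin_cases r <;> fin_cases r' <;>
    simp only [Fin.isValue, Fin.zero_eta, Fin.mk_one, cons_val_zero, cons_val_one,
      cons_val_fin_one, zero_ne_one, one_ne_zero, if_true, if_false] <;>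
    split_ifs <;> first | rfl | omega

theorem det_pentaK (t : ℕ) (a1 a2 b1 b2 c1 c2 : ℂ) :
    (pentaK (2 * t) a1 a2 b1 b2 c1 c2).det =
      (tridiag t a1 b1 c1).det * (tridiag t a2 b2 c2).det := by
  rw [mul_comm 2 t, pentaK_eq_reindex_blockDiagonal, det_reindex_self, det_blockDiagonal,
    Fin.prod_univ_two]
  rfl

theorem stmt11_general (a1 a2 b1 b2 c1 c2 : ℂ)
    (hb1 : b1 ≠ 0) (hb2 : b2 ≠ 0) (hc1 : c1 ≠ 0) (hc2 : c2 ≠ 0)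
    (t : ℕ) (n : ℕ) (hn : n = 2 * t)
    (s1 s2 : ℂ) (hs1 : s1 ^ 2 = b1 * c1) (hs2 : s2 ^ 2 = b2 * c2)
    (h1 : ∀ k : ℕ, 1 ≤ k → k ≤ n → Odd k →
      a1 ≠ 2 * s1 * (Real.cos ((k + 1) * Real.pi / (n + 2)) : ℂ) ∧
      a1 ≠ -(2 * s1 * (Real.cos ((k + 1) * Real.pi / (n + 2)) : ℂ)))
    (h2 : ∀ k : ℕ, 1 ≤ k → k ≤ n → Even k →
      a2 ≠ 2 * s2 * (Real.cos (k * Real.pi / (n + 2)) : ℂ) ∧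
      a2 ≠ -(2 * s2 * (Real.cos (k * Real.pi / (n + 2)) : ℂ))) :
    IsUnit (pentaK n a1 a2 b1 b2 c1 c2) := by
  subst hn
  have ht : (t : ℝ) + 1 ≠ 0 := by positivity
  rw [isUnit_iff_isUnit_det, det_pentaK, isUnit_iff_ne_zero]
  refine mul_ne_zero (det_tridiag_ne_zero hs1 (mul_ne_zero hb1 hc1) fun k hk => ?_)
    (det_tridiag_ne_zero hs2 (mul_ne_zero hb2 hc2) fun k hk => ?_)
  · have hangle : (((2 * k + 1 : ℕ) : ℝ) + 1) * Real.pi / ((2 * t : ℕ) + 2) =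
        (k + 1) * Real.pi / (t + 1) := by
      push_cast
      field_simp
      ring
    simpa only [hangle] using (h1 (2 * k + 1) (by omega) (by omega) (odd_two_mul_add_one k)).1
  · have hangle : ((2 * (k + 1) : ℕ) : ℝ) * Real.pi / ((2 * t : ℕ) + 2) =
        (k + 1) * Real.pi / (t + 1) := by
      push_cast
      field_simp
    simpa only [hangle] using (h2 (2 * (k + 1)) (by omega) (by omega) (even_two_mul (k + 1))).1

theorem stmt11 (a1 a2 b1 b2 c1 c2 : ℂ) (ha1 : a1 ≠ 0) (ha2 : a2 ≠ 0)
    (hb1 : b1 ≠ 0) (hb2 : b2 ≠ 0) (hc1 : c1 ≠ 0) (hc2 : c2 ≠ 0)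
    (t : ℕ) (ht : 1 ≤ t) (n : ℕ) (hn : n = 2 * t)
    (s1 s2 : ℂ) (hs1 : s1 ^ 2 = b1 * c1) (hs2 : s2 ^ 2 = b2 * c2)
    (h1 : ∀ k : ℕ, 1 ≤ k → k ≤ n → Odd k →
      a1 ≠ 2 * s1 * (Real.cos ((k + 1) * Real.pi / (n + 2)) : ℂ) ∧
      a1 ≠ -(2 * s1 * (Real.cos ((k + 1) * Real.pi / (n + 2)) : ℂ)))
    (h2 : ∀ k : ℕ, 1 ≤ k → k ≤ n → Even k →
      a2 ≠ 2 * s2 * (Real.cos (k * Real.pi / (n + 2)) : ℂ) ∧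
      a2 ≠ -(2 * s2 * (Real.cos (k * Real.pi / (n + 2)) : ℂ))) :
    IsUnit (pentaK n a1 a2 b1 b2 c1 c2) :=
  stmt11_general a1 a2 b1 b2 c1 c2 hb1 hb2 hc1 hc2 t n hn s1 s2 hs1 hs2 h1 h2
end

section
/- For n even and α an eigenvalue of the pentadiagonal 2-Toeplitz matrix K_n of the form α = a_1 − 2√(b_1c_1)·cos((j+1)π/(n+2)) with j odd (a zero of B_n), the vector (B_0(α), B_1(α), …, B_{n−1}(α))ᵀ is an eigenvector of K_n associated with α, where {B_i} is the associated polynomial sequence. In particular this vector is nonzero since B_0(α)=1. -/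
open Polynomial Matrix

/-!
Evaluating the recurrence of `B` at `α` says that `v = (B_0(α), B_1(α), …)` satisfies row `i` of
`K_n v = α v` for every `i`, provided the entries `v_n, v_{n+1}` that the last two rows would need
vanish. `v_n = 0` is the hypothesis on `α`; `v_{n+1} = 0` because `B_1 = 0` and `b_2 ≠ 0` force every
odd-indexed `B_i` to vanish. The vector is nonzero since `B_0 = 1`.
-/

def altCoeff {R : Type*} (x y : R) (i : ℕ) : R := if i % 2 = 0 then x else y

section altCoeff

variable {R : Type*} (x y : R) {i : ℕ}

theorem altCoeff_of_even (hi : Even i) : altCoeff x y i = x :=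
  if_pos (Nat.even_iff.mp hi)

theorem altCoeff_of_odd (hi : Odd i) : altCoeff x y i = y :=
  if_neg (by rw [Nat.odd_iff.mp hi]; decide)

theorem altCoeff_sub_two (hi : 2 ≤ i) : altCoeff x y (i - 2) = altCoeff x y i := by
  unfold altCoeff
  rw [show (i - 2) % 2 = i % 2 by omega]

end altCoeff

theorem Fin.sum_ite_val_eq {M : Type*} [AddCommMonoid M] (n m : ℕ) (a : M) :
    ∑ x : Fin n, (if (x : ℕ) = m then a else 0) = if m < n then a else 0 := by
  rw [Fin.sum_univ_eq_sum_range (fun k => if k = m then a else 0), Finset.sum_ite_eq']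
  simp only [Finset.mem_range]

section pentaK

variable {n : ℕ} {a1 a2 b1 b2 c1 c2 : ℂ}

theorem pentaK_apply (i j : Fin n) :
    pentaK n a1 a2 b1 b2 c1 c2 i j =
      if (i : ℕ) = j then altCoeff a1 a2 i
      else if (j : ℕ) = i + 2 then altCoeff b1 b2 i
      else if (i : ℕ) = j + 2 then altCoeff c1 c2 j else 0 :=
  rfl

theorem pentaK_mulVec_apply (v : ℕ → ℂ) (i : Fin n) :
    (pentaK n a1 a2 b1 b2 c1 c2 *ᵥ fun k : Fin n => v k) i =
      (if 2 ≤ (i : ℕ) then altCoeff c1 c2 i * v (i - 2) else 0) + altCoeff a1 a2 i * v i +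
        (if (i : ℕ) + 2 < n then altCoeff b1 b2 i * v (i + 2) else 0) := by
  have hsummand : ∀ k : ℕ, (if (i : ℕ) = k then altCoeff a1 a2 i
        else if k = i + 2 then altCoeff b1 b2 i
        else if (i : ℕ) = k + 2 then altCoeff c1 c2 k else 0) * v k =
      (if k = i - 2 then if 2 ≤ (i : ℕ) then altCoeff c1 c2 i * v (i - 2) else 0 else 0) +
        (if k = i then altCoeff a1 a2 i * v i else 0) +
        (if k = i + 2 then altCoeff b1 b2 i * v (i + 2) else 0) := by
    intro k
    obtain h | h | h | h : k + 2 = i ∨ k = i ∨ k = i + 2 ∨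
        (k + 2 ≠ i ∧ k ≠ i ∧ k ≠ i + 2) := by omega
    · obtain rfl : k = (i : ℕ) - 2 := by omega
      simp (disch := omega) only [if_pos, if_neg, if_true, altCoeff_sub_two, add_zero]
    all_goals
      try subst h
      simp (disch := omega) only [if_neg, if_true, ite_self, add_zero, zero_add, zero_mul]
  simp only [mulVec, dotProduct, pentaK_apply, hsummand, Finset.sum_add_distrib,
    Fin.sum_ite_val_eq, i.isLt, if_true]
  simp (disch := omega) only [if_pos]

theorem pentaK_mulVec_eq_smul {v : ℕ → ℂ} {μ : ℂ}
    (hrec : ∀ i, μ * v i = (if 2 ≤ i then altCoeff c1 c2 i * v (i - 2) else 0) +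
      altCoeff a1 a2 i * v i + altCoeff b1 b2 i * v (i + 2))
    (hvn : v n = 0) (hvn1 : v (n + 1) = 0) :
    pentaK n a1 a2 b1 b2 c1 c2 *ᵥ (fun i : Fin n => v i) = μ • fun i : Fin n => v i := by
  ext i
  have hlast : (if (i : ℕ) + 2 < n then altCoeff b1 b2 i * v (i + 2) else 0) =
      altCoeff b1 b2 i * v (i + 2) := by
    split_ifs with h
    · rfl
    · obtain h | h : (i : ℕ) + 2 = n ∨ (i : ℕ) + 2 = n + 1 := by omega
      all_goals rw [h, ‹v _ = 0›, mul_zero]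
  rw [pentaK_mulVec_apply, hlast, Pi.smul_apply, smul_eq_mul, hrec]

end pentaK

theorem eq_zero_of_odd_of_recurrence {R : Type*} [CommRing R] [NoZeroDivisors R] {v : ℕ → R}
    {μ a b c : R} (hb : b ≠ 0) (hv1 : v 1 = 0)
    (hrec : ∀ i, Odd i → μ * v i = (if 2 ≤ i then c * v (i - 2) else 0) + a * v i + b * v (i + 2))
    {i : ℕ} (hi : Odd i) : v i = 0 := by
  have step : ∀ i, Odd i → v i = 0 → (2 ≤ i → v (i - 2) = 0) → v (i + 2) = 0 := by
    intro i hi hvi hvi2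
    have h := hrec i hi
    have hbv : b * v (i + 2) = 0 := by
      split_ifs at h with h2
      · rw [hvi2 h2, hvi] at h
        linear_combination -h
      · rw [hvi] at h
        linear_combination -h
    exact (mul_eq_zero.mp hbv).resolve_left hb
  induction i using Nat.strong_induction_on with
  | _ i ih =>
    obtain rfl | ⟨j, rfl⟩ : i = 1 ∨ ∃ j, i = j + 2 := by
      obtain ⟨_ | k, rfl⟩ := hi
      exacts [.inl rfl, .inr ⟨2 * k + 1, by ring⟩]
    · exact hv1
    · have hj : Odd j := by simpa [Nat.odd_add] using hi
      exact step j hj (ih j (by omega) hj) fun h2 =>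
        ih (j - 2) (by omega) (Nat.Odd.sub_even h2 hj even_two)

/-- The four recurrences of the hypotheses, re-indexed by the row `i` of `K_n` they describe. -/
theorem X_mul_eq_of_recurrence {R : Type*} [CommRing R] {a1 a2 b1 b2 c1 c2 : R} {B : ℕ → R[X]}
    (hBr0 : X * B 0 = C a1 * B 0 + C b1 * B 2)
    (hBr1 : X * B 1 = C a2 * B 1 + C b2 * B 3)
    (hBodd : ∀ i, 3 ≤ i → Odd i →
      X * B (i - 1) = C c1 * B (i - 3) + C a1 * B (i - 1) + C b1 * B (i + 1))
    (hBeven : ∀ i, 3 ≤ i → Even i →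
      X * B (i - 1) = C c2 * B (i - 3) + C a2 * B (i - 1) + C b2 * B (i + 1))
    (i : ℕ) :
    X * B i = (if 2 ≤ i then C (altCoeff c1 c2 i) * B (i - 2) else 0) +
      C (altCoeff a1 a2 i) * B i + C (altCoeff b1 b2 i) * B (i + 2) := by
  match i with
  | 0 => simpa [altCoeff] using hBr0
  | 1 => simpa [altCoeff] using hBr1
  | i + 2 =>
    rcases Nat.even_or_odd i with hi | hi
    · have h := hBodd (i + 3) (by omega) (hi.add_odd (by decide))
      simp only [altCoeff_of_even _ _ (hi.add even_two)]
      simpa using h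
    · have h := hBeven (i + 3) (by omega) (hi.add_odd (by decide))
      simp only [altCoeff_of_odd _ _ (hi.add_even even_two)]
      simpa using h

theorem stmt12_general (a1 a2 b1 b2 c1 c2 : ℂ) (hb2 : b2 ≠ 0)
    (t : ℕ) (ht : 1 ≤ t) (n : ℕ) (hn : n = 2 * t)
    (B : ℕ → Polynomial ℂ)
    (B0 : B 0 = 1) (B1 : B 1 = 0)
    (hBr0 : Polynomial.X * B 0 = Polynomial.C a1 * B 0 + Polynomial.C b1 * B 2)
    (hBr1 : Polynomial.X * B 1 = Polynomial.C a2 * B 1 + Polynomial.C b2 * B 3)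
    (hBodd : ∀ i, 3 ≤ i → Odd i →
      Polynomial.X * B (i - 1) =
        Polynomial.C c1 * B (i - 3) + Polynomial.C a1 * B (i - 1) + Polynomial.C b1 * B (i + 1))
    (hBeven : ∀ i, 3 ≤ i → Even i →
      Polynomial.X * B (i - 1) =
        Polynomial.C c2 * B (i - 3) + Polynomial.C a2 * B (i - 1) + Polynomial.C b2 * B (i + 1))
    (α : ℂ)
    (hroot : (B n).eval α = 0) :
    (pentaK n a1 a2 b1 b2 c1 c2).mulVec (fun i : Fin n => (B i.val).eval α) =
      α • (fun i : Fin n => (B i.val).eval α) ∧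
    (fun i : Fin n => (B i.val).eval α) ≠ 0 := by
  have hrec : ∀ i, α * (B i).eval α =
      (if 2 ≤ i then altCoeff c1 c2 i * (B (i - 2)).eval α else 0) +
        altCoeff a1 a2 i * (B i).eval α + altCoeff b1 b2 i * (B (i + 2)).eval α := fun i => by
    simpa [apply_ite (eval α)] using
      congrArg (eval α) (X_mul_eq_of_recurrence hBr0 hBr1 hBodd hBeven i)
  have hodd : ∀ i, Odd i → (B i).eval α = 0 :=
    fun i => eq_zero_of_odd_of_recurrence (v := fun k => (B k).eval α) hb2 (by simp [B1])
      fun k hk => by simpa [altCoeff_of_odd _ _ hk] using hrec k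
  refine ⟨pentaK_mulVec_eq_smul hrec hroot (hodd _ (hn ▸ odd_two_mul_add_one t)), fun h => ?_⟩
  simpa [B0] using congrFun h ⟨0, by omega⟩

theorem stmt12 (a1 a2 b1 b2 c1 c2 : ℂ) (hb1 : b1 ≠ 0) (hb2 : b2 ≠ 0) (hc1 : c1 ≠ 0) (hc2 : c2 ≠ 0)
    (t : ℕ) (ht : 1 ≤ t) (n : ℕ) (hn : n = 2 * t)
    (s1 : ℂ) (hs1 : s1 ^ 2 = b1 * c1)
    (B : ℕ → Polynomial ℂ)
    (B0 : B 0 = 1) (B1 : B 1 = 0)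
    (hBr0 : Polynomial.X * B 0 = Polynomial.C a1 * B 0 + Polynomial.C b1 * B 2)
    (hBr1 : Polynomial.X * B 1 = Polynomial.C a2 * B 1 + Polynomial.C b2 * B 3)
    (hBodd : ∀ i, 3 ≤ i → Odd i →
      Polynomial.X * B (i - 1) =
        Polynomial.C c1 * B (i - 3) + Polynomial.C a1 * B (i - 1) + Polynomial.C b1 * B (i + 1))
    (hBeven : ∀ i, 3 ≤ i → Even i →
      Polynomial.X * B (i - 1) =
        Polynomial.C c2 * B (i - 3) + Polynomial.C a2 * B (i - 1) + Polynomial.C b2 * B (i + 1))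
    (j : ℕ) (hj1 : 1 ≤ j) (hjn : j ≤ n) (hjodd : Odd j)
    (α : ℂ) (hαform : α = a1 - 2 * s1 * (Real.cos ((j + 1) * Real.pi / (n + 2)) : ℂ))
    (hroot : (B n).eval α = 0) :
    (pentaK n a1 a2 b1 b2 c1 c2).mulVec (fun i : Fin n => (B i.val).eval α) =
      α • (fun i : Fin n => (B i.val).eval α) ∧
    (fun i : Fin n => (B i.val).eval α) ≠ 0 :=
  stmt12_general a1 a2 b1 b2 c1 c2 hb2 t ht n hn B B0 B1 hBr0 hBr1 hBodd hBeven α hroot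
end

section
/- Let K_6 be the 6×6 pentadiagonal 2-Toeplitz matrix. For every natural number s, the (1,1) entry of K_6^s equals (1/4)·[(a_1+√(2b_1c_1))^s + 2·a_1^s + (a_1−√(2b_1c_1))^s], and the (1,3) entry of K_6^s equals (√2/4)·√(b_1/c_1)·[(a_1+√(2b_1c_1))^s − (a_1−√(2b_1c_1))^s]. -/
open Polynomial Matrix

/-!
Acting on row vectors, `K₆` preserves the vectors supported on the even indices `0, 2, 4` and acts
there as the tridiagonal Toeplitz matrix with diagonal `a₁`, superdiagonal `b₁` and subdiagonal
`c₁`. For `σ² = 2b₁c₁` its left eigenvectors are `(c₁, ±σ, b₁)` for the eigenvalues `a₁ ± σ`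
and `(c₁, 0, -b₁)` for `a₁`, and `4c₁ e₀` is the sum of the first and the third plus twice the
second. Hence `4c₁ e₀ K₆ˢ` is explicit; the compatibility of the square roots gives
`√(2b₁c₁) = √2 · √(b₁/c₁) · c₁`.
-/

theorem Matrix.vecMul_pow_of_vecMul_eq_smul {n R : Type*} [Fintype n] [DecidableEq n] [CommSemiring R]
    {A : Matrix n n R} {u : n → R} {μ : R} (hu : u ᵥ* A = μ • u) (s : ℕ) :
    u ᵥ* (A ^ s) = μ ^ s • u := by
  induction s with
  | zero => simp
  | succ s ih => rw [pow_succ, ← vecMul_vecMul, ih, smul_vecMul, hu, smul_smul, pow_succ]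

section pentaK

variable (a1 a2 b1 b2 c1 c2 : ℂ)

theorem vecMul_pentaK_six_even (x y z : ℂ) :
    ![x, 0, y, 0, z, 0] ᵥ* pentaK 6 a1 a2 b1 b2 c1 c2 =
      ![a1 * x + c1 * y, 0, b1 * x + a1 * y + c1 * z, 0, b1 * y + a1 * z, 0] := by
  ext j
  fin_cases j <;> simp [vecMul, dotProduct, Fin.sum_univ_six, pentaK] <;> ring

theorem vecMul_pentaK_six_eq_add_smul {σ : ℂ} (hσ : σ ^ 2 = 2 * b1 * c1) :
    ![c1, 0, σ, 0, b1, 0] ᵥ* pentaK 6 a1 a2 b1 b2 c1 c2 = (a1 + σ) • ![c1, 0, σ, 0, b1, 0] := by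
  rw [vecMul_pentaK_six_even]
  ext j
  fin_cases j <;> simp
  · ring
  · linear_combination -hσ
  · ring

theorem vecMul_pentaK_six_eq_smul :
    ![c1, 0, 0, 0, -b1, 0] ᵥ* pentaK 6 a1 a2 b1 b2 c1 c2 = a1 • ![c1, 0, 0, 0, -b1, 0] := by
  rw [vecMul_pentaK_six_even]
  ext j
  fin_cases j <;> simp
  ring

theorem pentaK_six_pow_row_zero {σ : ℂ} (hσ : σ ^ 2 = 2 * b1 * c1) (s : ℕ) :
    (4 * c1) • (pentaK 6 a1 a2 b1 b2 c1 c2 ^ s).row 0 =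
      (a1 + σ) ^ s • ![c1, 0, σ, 0, b1, 0] + (2 * a1 ^ s) • ![c1, 0, 0, 0, -b1, 0] +
        (a1 - σ) ^ s • ![c1, 0, -σ, 0, b1, 0] := by
  have he0 : (4 * c1) • Pi.single 0 1 =
      ![c1, 0, σ, 0, b1, 0] + (2 : ℂ) • ![c1, 0, 0, 0, -b1, 0] + ![c1, 0, -σ, 0, b1, 0] := by
    ext j
    fin_cases j <;> simp <;> ring
  rw [← single_one_vecMul, ← smul_vecMul, he0, add_vecMul, add_vecMul, smul_vecMul,
    vecMul_pow_of_vecMul_eq_smul (vecMul_pentaK_six_eq_add_smul a1 a2 b1 b2 c1 c2 hσ),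
    vecMul_pow_of_vecMul_eq_smul (vecMul_pentaK_six_eq_smul a1 a2 b1 b2 c1 c2),
    vecMul_pow_of_vecMul_eq_smul (vecMul_pentaK_six_eq_add_smul a1 a2 b1 b2 c1 c2 (by rwa [neg_sq])),
    smul_smul, mul_comm, ← sub_eq_add_neg]

end pentaK

theorem stmt16_general (a1 a2 b1 b2 c1 c2 : ℂ) (hb1 : b1 ≠ 0)
    (hc1 : c1 ≠ 0)
    (s1 r1 : ℂ) (hs1 : s1 ^ 2 = 2 * b1 * c1)
    (hcompat : r1 * s1 = b1 * (Real.sqrt 2 : ℂ)) :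
    ∀ s : ℕ,
      ((pentaK 6 a1 a2 b1 b2 c1 c2) ^ s) 0 0 =
        (1 / 4) * ((a1 + s1) ^ s + 2 * a1 ^ s + (a1 - s1) ^ s) ∧
      ((pentaK 6 a1 a2 b1 b2 c1 c2) ^ s) 0 2 =
        ((Real.sqrt 2 : ℂ) / 4) * r1 * ((a1 + s1) ^ s - (a1 - s1) ^ s) := by
  intro s
  have hrow := pentaK_six_pow_row_zero a1 a2 b1 b2 c1 c2 hs1 s
  have h00 := congrFun hrow 0
  have h02 := congrFun hrow 2
  simp only [Pi.add_apply, Pi.smul_apply, row_apply, smul_eq_mul, cons_val_zero, cons_val,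
    mul_zero, mul_neg, add_zero] at h00 h02
  have hsqrt2 : (Real.sqrt 2 : ℂ) ^ 2 = 2 := by
    norm_cast
    exact Real.sq_sqrt zero_le_two
  have hs1_ne : s1 ≠ 0 := by
    rintro rfl
    simp [hb1, hc1] at hs1
  have hs1_eq : s1 = Real.sqrt 2 * r1 * c1 := by
    apply mul_left_cancel₀ hs1_ne
    linear_combination hs1 - (Real.sqrt 2 * c1) * hcompat - b1 * c1 * hsqrt2
  have h4c1 : 4 * c1 ≠ 0 := mul_ne_zero (by norm_num) hc1
  constructor
  · apply mul_left_cancel₀ h4c1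
    linear_combination h00
  · apply mul_left_cancel₀ h4c1
    linear_combination h02 + ((a1 + s1) ^ s - (a1 - s1) ^ s) * hs1_eq

theorem stmt16 (a1 a2 b1 b2 c1 c2 : ℂ) (hb1 : b1 ≠ 0) (hb2 : b2 ≠ 0)
    (hc1 : c1 ≠ 0) (hc2 : c2 ≠ 0)
    (s1 r1 : ℂ) (hs1 : s1 ^ 2 = 2 * b1 * c1) (hr1 : r1 ^ 2 = b1 / c1)
    (hcompat : r1 * s1 = b1 * (Real.sqrt 2 : ℂ)) :
    ∀ s : ℕ,
      ((pentaK 6 a1 a2 b1 b2 c1 c2) ^ s) 0 0 =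
        (1 / 4) * ((a1 + s1) ^ s + 2 * a1 ^ s + (a1 - s1) ^ s) ∧
      ((pentaK 6 a1 a2 b1 b2 c1 c2) ^ s) 0 2 =
        ((Real.sqrt 2 : ℂ) / 4) * r1 * ((a1 + s1) ^ s - (a1 - s1) ^ s) :=
  stmt16_general a1 a2 b1 b2 c1 c2 hb1 hc1 s1 r1 hs1 hcompat
end

section
/- Let K_6 be the 6×6 pentadiagonal 2-Toeplitz matrix. For every natural number s, the (3,3) entry of K_6^s equals (1/2)·[(a_1+√(2b_1c_1))^s + (a_1−√(2b_1c_1))^s], and the (5,1) entry of K_6^s equals (c_1/(4b_1))·[(a_1+√(2b_1c_1))^s − 2·a_1^s + (a_1−√(2b_1c_1))^s]. -/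
open Polynomial Matrix

/-!
Entries of `pentaK` only connect indices of equal parity, so on the even indices `0, 2, 4` the
powers of `K₆` are the powers of the tridiagonal Toeplitz block `a₁ • 1 + N` with
`N = !![0, b₁, 0; c₁, 0, b₁; 0, c₁, 0]`. Since `N³ = t² • N` for `t² = 2 b₁ c₁`, the matrix `N`
has eigenvalues `0, t, -t`, with spectral projectors `1 - N² / t²` and `(N² ± t N) / (2 t²)`;
hence `(a₁ • 1 + N) ^ s` is the corresponding combination of `a₁ ^ s`, `(a₁ + t) ^ s`,
`(a₁ - t) ^ s`, and the two entries are read off from it.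
-/

theorem Matrix.submatrix_pow_of_apply_eq_zero {m n R : Type*} [Fintype m] [Fintype n]
    [DecidableEq m] [DecidableEq n] [Semiring R] (A : Matrix n n R) {f : m → n}
    (hf : Function.Injective f) (hA : ∀ i k, k ∉ Set.range f → A (f i) k = 0) (s : ℕ) :
    (A ^ s).submatrix f f = A.submatrix f f ^ s := by
  induction s with
  | zero => simp only [pow_zero, submatrix_one _ hf]
  | succ s ih =>
    ext i j
    rw [pow_succ', pow_succ', ← ih, submatrix_apply, mul_apply, mul_apply]
    exact (Fintype.sum_of_injective f hf _ _ (fun k hk => by rw [hA i k hk, zero_mul])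
      (fun k => rfl)).symm

theorem pentaK_apply_eq_zero_of_mod_two_ne (n : ℕ) (a1 a2 b1 b2 c1 c2 : ℂ) {i j : Fin n}
    (h : i.val % 2 ≠ j.val % 2) : pentaK n a1 a2 b1 b2 c1 c2 i j = 0 := by
  simp only [pentaK, of_apply]
  rw [if_neg (by omega), if_neg (by omega), if_neg (by omega)]

def Fin.evenEmb (n : ℕ) : Fin n → Fin (2 * n) := fun k => ⟨2 * k, by omega⟩

theorem Fin.evenEmb_injective (n : ℕ) : Function.Injective (Fin.evenEmb n) := by
  intro i j h
  simp only [Fin.evenEmb, Fin.mk.injEq] at h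
  omega

theorem Fin.mem_range_evenEmb {n : ℕ} {k : Fin (2 * n)} (hk : k.val % 2 = 0) :
    k ∈ Set.range (Fin.evenEmb n) :=
  ⟨⟨k / 2, by omega⟩, by ext; simp only [Fin.evenEmb]; omega⟩

theorem pentaK_pow_submatrix_evenEmb (n : ℕ) (a1 a2 b1 b2 c1 c2 : ℂ) (s : ℕ) :
    (pentaK (2 * n) a1 a2 b1 b2 c1 c2 ^ s).submatrix (Fin.evenEmb n) (Fin.evenEmb n) =
      (pentaK (2 * n) a1 a2 b1 b2 c1 c2).submatrix (Fin.evenEmb n) (Fin.evenEmb n) ^ s := by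
  refine submatrix_pow_of_apply_eq_zero _ (Fin.evenEmb_injective n) (fun i k hk => ?_) s
  refine pentaK_apply_eq_zero_of_mod_two_ne _ _ _ _ _ _ _ fun h => hk (Fin.mem_range_evenEmb ?_)
  simp only [Fin.evenEmb] at h
  omega

theorem pentaK_six_submatrix_evenEmb (a1 a2 b1 b2 c1 c2 : ℂ) :
    (pentaK (2 * 3) a1 a2 b1 b2 c1 c2).submatrix (Fin.evenEmb 3) (Fin.evenEmb 3) =
      a1 • 1 + !![0, b1, 0; c1, 0, b1; 0, c1, 0] := by
  ext i j
  fin_cases i <;> fin_cases j <;> simp [pentaK, Fin.evenEmb]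

theorem tridiag_sq {K : Type*} [CommRing K] (b c : K) :
    !![0, b, 0; c, 0, b; 0, c, 0] ^ 2 = !![b * c, 0, b ^ 2; 0, 2 * b * c, 0; c ^ 2, 0, b * c] := by
  rw [sq, mul_fin_three]
  ring_nf

theorem tridiag_pow_three {K : Type*} [CommRing K] (b c : K) :
    !![0, b, 0; c, 0, b; 0, c, 0] ^ 3 = (2 * b * c) • !![0, b, 0; c, 0, b; 0, c, 0] := by
  rw [pow_succ, tridiag_sq, mul_fin_three, smul_of]
  simp only [smul_cons, smul_eq_mul, smul_empty]
  ring_nf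

theorem add_pow_of_pow_three_eq {K R : Type*} [CommRing K] [Ring R] [Algebra K R]
    (a t : K) {x : R} (hx : x ^ 3 = t ^ 2 • x) (s : ℕ) :
    (2 * t ^ 2) • (a • 1 + x) ^ s =
      (2 * a ^ s) • (t ^ 2 • 1 - x ^ 2) + (a + t) ^ s • (x ^ 2 + t • x) +
        (a - t) ^ s • (x ^ 2 - t • x) := by
  induction s with
  | zero => simp only [pow_zero, one_smul]; module
  | succ s ih =>
    have hx' : x ^ 2 * x = t ^ 2 • x := by rw [← pow_succ, hx]
    rw [pow_succ (a • 1 + x), ← smul_mul_assoc, ih]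
    simp only [add_mul, sub_mul, mul_add, smul_mul_assoc, mul_smul_comm, one_mul, mul_one, hx', ← sq]
    module

theorem stmt17_general (a1 a2 b1 b2 c1 c2 : ℂ) (hb1 : b1 ≠ 0)
    (hc1 : c1 ≠ 0)
    (s1 : ℂ) (hs1 : s1 ^ 2 = 2 * b1 * c1) :
    ∀ s : ℕ,
      ((pentaK 6 a1 a2 b1 b2 c1 c2) ^ s) 2 2 =
        (1 / 2) * ((a1 + s1) ^ s + (a1 - s1) ^ s) ∧
      ((pentaK 6 a1 a2 b1 b2 c1 c2) ^ s) 4 0 =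
        (c1 / (4 * b1)) * ((a1 + s1) ^ s - 2 * a1 ^ s + (a1 - s1) ^ s) := by
  intro s
  have hpow := add_pow_of_pow_three_eq a1 s1 (hs1 ▸ tridiag_pow_three b1 c1) s
  rw [← pentaK_six_submatrix_evenEmb a1 a2 b1 b2 c1 c2, ← pentaK_pow_submatrix_evenEmb,
    tridiag_sq] at hpow
  have h22 : 2 * s1 ^ 2 * (pentaK 6 a1 a2 b1 b2 c1 c2 ^ s) 2 2 =
      2 * a1 ^ s * (s1 ^ 2 * 1 - 2 * b1 * c1) + (a1 + s1) ^ s * (2 * b1 * c1 + s1 * 0) +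
        (a1 - s1) ^ s * (2 * b1 * c1 - s1 * 0) := congrFun₂ hpow 1 1
  have h40 : 2 * s1 ^ 2 * (pentaK 6 a1 a2 b1 b2 c1 c2 ^ s) 4 0 =
      2 * a1 ^ s * (s1 ^ 2 * 0 - c1 ^ 2) + (a1 + s1) ^ s * (c1 ^ 2 + s1 * 0) +
        (a1 - s1) ^ s * (c1 ^ 2 - s1 * 0) := congrFun₂ hpow 2 0
  have h2s1 : 2 * s1 ^ 2 ≠ 0 := by simp [hs1, hb1, hc1]
  constructor
  · apply mul_left_cancel₀ h2s1
    linear_combination h22 + (2 * a1 ^ s - (a1 + s1) ^ s - (a1 - s1) ^ s) * hs1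
  · apply mul_left_cancel₀ h2s1
    rw [h40, hs1]
    field_simp
    ring

theorem stmt17 (a1 a2 b1 b2 c1 c2 : ℂ) (hb1 : b1 ≠ 0) (hb2 : b2 ≠ 0)
    (hc1 : c1 ≠ 0) (hc2 : c2 ≠ 0)
    (s1 : ℂ) (hs1 : s1 ^ 2 = 2 * b1 * c1) :
    ∀ s : ℕ,
      ((pentaK 6 a1 a2 b1 b2 c1 c2) ^ s) 2 2 =
        (1 / 2) * ((a1 + s1) ^ s + (a1 - s1) ^ s) ∧
      ((pentaK 6 a1 a2 b1 b2 c1 c2) ^ s) 4 0 =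
        (c1 / (4 * b1)) * ((a1 + s1) ^ s - 2 * a1 ^ s + (a1 - s1) ^ s) :=
  stmt17_general a1 a2 b1 b2 c1 c2 hb1 hc1 s1 hs1
end
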